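/- Let X ∈ ℝ^{n×K} satisfy σ_K(X)² ≥ γ > 0 (the square of the K-th largest singular value of X is at least γ), and for l = 1,…,L let B_l ∈ ℝ^{K×K} be symmetric with σ_min(B_l) ≥ β_l > 0. Set P_l = X·B_l·X^T. Then the K-th largest eigenvalue of Σ_{l=1}^L P_l² satisfies λ_K(Σ_{l=1}^L P_l²) ≥ γ²·Σ_{l=1}^L β_l². -/

import Mathlib

/-!
Courant–Fischer with the column space of `X` as test subspace. It has dimension `K`, since
`γ ‖u‖² ≤ ‖Xu‖²` makes `X` injective. As each `P_l` is symmetric, `xᵀ (∑ P_l²) x = ∑ ‖P_l x‖²`,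
and for `x = Xu`
`‖P_l x‖² = ‖X B_l XᵀX u‖² ≥ γ ‖B_l XᵀX u‖² ≥ γ β_l² ‖XᵀX u‖² ≥ γ² β_l² ‖Xu‖²`,
the last step by Cauchy–Schwarz, `‖Xu‖² = ⟪u, XᵀX u⟫ ≤ ‖u‖ ‖XᵀX u‖`, combined with
`γ ‖u‖² ≤ ‖Xu‖²`.
-/

open Matrix

noncomputable section

namespace SGRDPG

/-- Squared Euclidean norm of a vector. -/
def sqnorm {d : ℕ} (x : Fin d → ℝ) : ℝ := ∑ j, (x j) ^ 2

/-- Euclidean norm of a vector. -/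
def enorm {d : ℕ} (x : Fin d → ℝ) : ℝ := Real.sqrt (sqnorm x)

/-- Smallest singular value of a matrix. -/
def sigMin {a b : ℕ} (A : Matrix (Fin a) (Fin b) ℝ) : ℝ :=
  sInf {c | ∃ x : Fin b → ℝ, sqnorm x = 1 ∧ c = enorm (A.mulVec x)}

/-- The `k`-th largest eigenvalue of a symmetric matrix, via the Courant-Fischer
max-min characterization. -/
def lamK {d : ℕ} (k : ℕ) (A : Matrix (Fin d) (Fin d) ℝ) : ℝ :=
  sSup {c | ∃ V : Submodule ℝ (Fin d → ℝ), Module.finrank ℝ V = k ∧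
    ∀ x ∈ V, c * sqnorm x ≤ ∑ i, x i * A.mulVec x i}

/-- The `k`-th largest singular value of a matrix: `σ_k(A) = √(λ_k(AᵀA))`. -/
def sigK {a b : ℕ} (k : ℕ) (A : Matrix (Fin a) (Fin b) ℝ) : ℝ :=
  Real.sqrt (lamK k (Aᵀ * A))

section Norms

variable {d : ℕ}

lemma sqnorm_eq_dotProduct (x : Fin d → ℝ) : sqnorm x = x ⬝ᵥ x := by
  simp only [sqnorm, dotProduct, sq]

lemma sqnorm_nonneg (x : Fin d → ℝ) : 0 ≤ sqnorm x :=
  Finset.sum_nonneg fun _ _ => sq_nonneg _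

lemma sqnorm_eq_zero_iff {x : Fin d → ℝ} : sqnorm x = 0 ↔ x = 0 := by
  rw [sqnorm_eq_dotProduct, dotProduct_self_eq_zero]

lemma sqnorm_smul (c : ℝ) (x : Fin d → ℝ) : sqnorm (c • x) = c ^ 2 * sqnorm x := by
  simp only [sqnorm, Pi.smul_apply, smul_eq_mul, mul_pow, Finset.mul_sum]

lemma enorm_nonneg (x : Fin d → ℝ) : 0 ≤ enorm x := Real.sqrt_nonneg _

lemma enorm_sq (x : Fin d → ℝ) : enorm x ^ 2 = sqnorm x := Real.sq_sqrt (sqnorm_nonneg x)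

lemma enorm_smul (c : ℝ) (x : Fin d → ℝ) : enorm (c • x) = |c| * enorm x := by
  rw [enorm, enorm, sqnorm_smul, Real.sqrt_mul (sq_nonneg c), Real.sqrt_sq_eq_abs]

lemma abs_le_enorm (x : Fin d → ℝ) (i : Fin d) : |x i| ≤ enorm x :=
  Real.abs_le_sqrt <| Finset.single_le_sum (f := fun j => x j ^ 2)
    (fun j _ => sq_nonneg (x j)) (Finset.mem_univ i)

lemma dotProduct_gram_mulVec {a : ℕ} (A : Matrix (Fin a) (Fin d) ℝ) (x : Fin d → ℝ) :
    x ⬝ᵥ ((Aᵀ * A) *ᵥ x) = sqnorm (A *ᵥ x) := by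
  rw [← mulVec_mulVec, dotProduct_mulVec, vecMul_transpose, sqnorm_eq_dotProduct]

lemma dotProduct_mulVec_le_mul_sqnorm (M : Matrix (Fin d) (Fin d) ℝ) (x : Fin d → ℝ) :
    x ⬝ᵥ (M *ᵥ x) ≤ (∑ i, ∑ j, |M i j|) * sqnorm x := by
  rw [← enorm_sq, Finset.sum_mul]
  refine Finset.sum_le_sum fun i _ => ?_
  rw [mulVec, dotProduct, Finset.mul_sum, Finset.sum_mul]
  refine Finset.sum_le_sum fun j _ => ?_
  calc x i * (M i j * x j) ≤ |x i * (M i j * x j)| := le_abs_self _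
    _ = |M i j| * (|x i| * |x j|) := by rw [abs_mul, abs_mul]; ring
    _ ≤ |M i j| * enorm x ^ 2 := by
        rw [sq]
        exact mul_le_mul_of_nonneg_left (mul_le_mul (abs_le_enorm x i) (abs_le_enorm x j)
          (abs_nonneg _) (enorm_nonneg x)) (abs_nonneg _)

end Norms

section Spectral

variable {a d : ℕ}

lemma lamK_zero (M : Matrix (Fin d) (Fin d) ℝ) : lamK 0 M = 0 := by
  have hall : ∀ c : ℝ, ∃ V : Submodule ℝ (Fin d → ℝ), Module.finrank ℝ V = 0 ∧
      ∀ x ∈ V, c * sqnorm x ≤ ∑ i, x i * (M *ᵥ x) i := fun c =>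
    ⟨⊥, finrank_bot ℝ _, fun x hx => by
      rw [(Submodule.mem_bot ℝ).1 hx, sqnorm_eq_zero_iff.2 rfl]; simp⟩
  simp only [lamK, hall, Set.ofPred_true, Real.sSup_univ]

lemma sigK_zero (A : Matrix (Fin a) (Fin d) ℝ) : sigK 0 A = 0 := by
  rw [sigK, lamK_zero, Real.sqrt_zero]

/-- Only the whole space has full dimension, so `lamK d` is bounded by every Rayleigh quotient. -/
lemma lamK_gram_mul_sqnorm_le (A : Matrix (Fin a) (Fin d) ℝ) (u : Fin d → ℝ) :
    lamK d (Aᵀ * A) * sqnorm u ≤ sqnorm (A *ᵥ u) := by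
  rcases (sqnorm_nonneg u).eq_or_lt with hu | hu
  · rw [← hu, mul_zero]
    exact sqnorm_nonneg _
  refine (le_div_iff₀ hu).1 (csSup_le ⟨0, ⊤, by simp, fun x _ => ?_⟩ ?_)
  · rw [zero_mul]
    exact (sqnorm_nonneg (A *ᵥ x)).trans_eq (dotProduct_gram_mulVec A x).symm
  · rintro c ⟨V, hV, hVq⟩
    have hVtop : V = ⊤ := Submodule.eq_top_of_finrank_eq (by simp [hV])
    have hcu := hVq u (hVtop ▸ Submodule.mem_top)
    exact (le_div_iff₀ hu).2 ((dotProduct_gram_mulVec A u) ▸ hcu)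

lemma sq_sigK_mul_sqnorm_le (A : Matrix (Fin a) (Fin d) ℝ) (u : Fin d → ℝ) :
    sigK d A ^ 2 * sqnorm u ≤ sqnorm (A *ᵥ u) := by
  rcases le_total (lamK d (Aᵀ * A)) 0 with h | h
  · rw [sigK, Real.sqrt_eq_zero'.2 h]
    simpa using sqnorm_nonneg (A *ᵥ u)
  · rw [sigK, Real.sq_sqrt h]
    exact lamK_gram_mul_sqnorm_le A u

lemma sigMin_mul_enorm_le (A : Matrix (Fin a) (Fin d) ℝ) (x : Fin d → ℝ) :
    sigMin A * enorm x ≤ enorm (A *ᵥ x) := by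
  rcases (enorm_nonneg x).eq_or_lt with hx | hx
  · rw [← hx, mul_zero]
    exact enorm_nonneg _
  have hunit : sqnorm ((enorm x)⁻¹ • x) = 1 := by
    rw [sqnorm_smul, ← enorm_sq, inv_pow, inv_mul_cancel₀ (by positivity)]
  have hle : sigMin A ≤ enorm (A *ᵥ ((enorm x)⁻¹ • x)) :=
    csInf_le ⟨0, by rintro _ ⟨y, -, rfl⟩; exact enorm_nonneg _⟩ ⟨_, hunit, rfl⟩
  rwa [mulVec_smul, enorm_smul, abs_inv, abs_of_pos hx, ← div_eq_inv_mul,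
    le_div_iff₀ hx] at hle

lemma sq_mul_sqnorm_le_of_le_sigMin {β : ℝ} (hβ : 0 ≤ β) {A : Matrix (Fin a) (Fin d) ℝ}
    (h : β ≤ sigMin A) (x : Fin d → ℝ) : β ^ 2 * sqnorm x ≤ sqnorm (A *ᵥ x) := by
  rw [← enorm_sq, ← enorm_sq, ← mul_pow]
  gcongr
  · exact mul_nonneg hβ (enorm_nonneg x)
  exact (mul_le_mul_of_nonneg_right h (enorm_nonneg x)).trans (sigMin_mul_enorm_le A x)

lemma le_lamK {k : ℕ} (hk : 0 < k) {M : Matrix (Fin d) (Fin d) ℝ} {c : ℝ}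
    (V : Submodule ℝ (Fin d → ℝ)) (hV : Module.finrank ℝ V = k)
    (hc : ∀ x ∈ V, c * sqnorm x ≤ x ⬝ᵥ (M *ᵥ x)) : c ≤ lamK k M := by
  refine le_csSup ⟨∑ i, ∑ j, |M i j|, ?_⟩ ⟨V, hV, hc⟩
  rintro c' ⟨W, hW, hc'⟩
  obtain ⟨z, hzW, hz⟩ := (Submodule.ne_bot_iff W).1 (by rintro rfl; simp at hW; omega)
  have hzpos : 0 < sqnorm z := (sqnorm_nonneg z).lt_of_ne' (mt sqnorm_eq_zero_iff.1 hz)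
  exact le_of_mul_le_mul_right ((hc' z hzW).trans (dotProduct_mulVec_le_mul_sqnorm M z)) hzpos

end Spectral

section Gram

variable {a d : ℕ} {γ : ℝ} {A : Matrix (Fin a) (Fin d) ℝ}

lemma finrank_range_mulVecLin_of_mul_sqnorm_le (hγ : 0 < γ)
    (hA : ∀ u, γ * sqnorm u ≤ sqnorm (A *ᵥ u)) :
    Module.finrank ℝ (LinearMap.range A.mulVecLin) = d := by
  have hinj : Function.Injective A.mulVecLin := by
    refine (injective_iff_map_eq_zero _).2 fun u hu => sqnorm_eq_zero_iff.1 ?_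
    have h := hA u
    rw [← mulVecLin_apply, hu, sqnorm_eq_zero_iff.2 rfl] at h
    exact le_antisymm (nonpos_of_mul_nonpos_right h hγ) (sqnorm_nonneg u)
  rw [LinearMap.finrank_range_of_inj hinj, Module.finrank_fin_fun]

lemma mul_sqnorm_mulVec_le_sqnorm_gram_mulVec (hγ : 0 ≤ γ)
    (hA : ∀ u, γ * sqnorm u ≤ sqnorm (A *ᵥ u)) (u : Fin d → ℝ) :
    γ * sqnorm (A *ᵥ u) ≤ sqnorm ((Aᵀ * A) *ᵥ u) := by
  have hcs : sqnorm (A *ᵥ u) ^ 2 ≤ sqnorm u * sqnorm ((Aᵀ * A) *ᵥ u) := by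
    rw [← dotProduct_gram_mulVec]
    exact Finset.sum_mul_sq_le_sq_mul_sq _ _ _
  rcases (sqnorm_nonneg (A *ᵥ u)).eq_or_lt with h0 | hpos
  · rw [← h0, mul_zero]
    exact sqnorm_nonneg _
  refine le_of_mul_le_mul_left ?_ hpos
  calc sqnorm (A *ᵥ u) * (γ * sqnorm (A *ᵥ u)) = γ * sqnorm (A *ᵥ u) ^ 2 := by ring
    _ ≤ γ * (sqnorm u * sqnorm ((Aᵀ * A) *ᵥ u)) := by gcongr
    _ = γ * sqnorm u * sqnorm ((Aᵀ * A) *ᵥ u) := by ring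
    _ ≤ sqnorm (A *ᵥ u) * sqnorm ((Aᵀ * A) *ᵥ u) := by
        gcongr
        · exact sqnorm_nonneg _
        · exact hA u

lemma mul_sqnorm_le_sqnorm_conj_mulVec (hγ : 0 ≤ γ)
    (hA : ∀ u, γ * sqnorm u ≤ sqnorm (A *ᵥ u)) {B : Matrix (Fin d) (Fin d) ℝ} {β : ℝ}
    (hB : ∀ v, β ^ 2 * sqnorm v ≤ sqnorm (B *ᵥ v)) (u : Fin d → ℝ) :
    γ ^ 2 * β ^ 2 * sqnorm (A *ᵥ u) ≤ sqnorm ((A * B * Aᵀ) *ᵥ (A *ᵥ u)) := by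
  have hconj : (A * B * Aᵀ) *ᵥ (A *ᵥ u) = A *ᵥ (B *ᵥ ((Aᵀ * A) *ᵥ u)) := by
    simp only [mulVec_mulVec, Matrix.mul_assoc]
  rw [hconj]
  calc γ ^ 2 * β ^ 2 * sqnorm (A *ᵥ u) = γ * β ^ 2 * (γ * sqnorm (A *ᵥ u)) := by ring
    _ ≤ γ * β ^ 2 * sqnorm ((Aᵀ * A) *ᵥ u) := by
        gcongr; exact mul_sqnorm_mulVec_le_sqnorm_gram_mulVec hγ hA u
    _ ≤ γ * sqnorm (B *ᵥ ((Aᵀ * A) *ᵥ u)) := by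
        rw [mul_assoc]; gcongr; exact hB _
    _ ≤ sqnorm (A *ᵥ (B *ᵥ ((Aᵀ * A) *ᵥ u))) := hA _

end Gram

lemma dotProduct_sum_mul_self_mulVec {d L : ℕ} {P : Fin L → Matrix (Fin d) (Fin d) ℝ}
    (hP : ∀ l, (P l)ᵀ = P l) (x : Fin d → ℝ) :
    x ⬝ᵥ ((∑ l, P l * P l) *ᵥ x) = ∑ l, sqnorm (P l *ᵥ x) := by
  rw [sum_mulVec, dotProduct_sum]
  refine Finset.sum_congr rfl fun l _ => ?_
  nth_rw 1 [← hP l]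
  exact dotProduct_gram_mulVec (P l) x

/-- **spectral lower bound for sums of squared probability matrices.**
If `σ_K(X)² ≥ γ > 0` and the symmetric matrices `B_l` satisfy `σ_min(B_l) ≥ β_l > 0`,
then with `P_l = X B_l Xᵀ`, `λ_K(Σ_l P_l²) ≥ γ² Σ_l β_l²`. -/
theorem sum_of_squares_spectral_lower_bound
    (n K L : ℕ) (X : Matrix (Fin n) (Fin K) ℝ) (γ : ℝ) (hγ : 0 < γ)
    (hX : γ ≤ (sigK K X) ^ 2)
    (B : Fin L → Matrix (Fin K) (Fin K) ℝ) (β : Fin L → ℝ)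
    (hβ : ∀ l, 0 < β l)
    (hBsym : ∀ l, (B l)ᵀ = B l)
    (hB : ∀ l, β l ≤ sigMin (B l)) :
    γ ^ 2 * ∑ l, (β l) ^ 2 ≤
      lamK K (∑ l, (X * B l * Xᵀ) * (X * B l * Xᵀ)) := by
  have hK : 0 < K := Nat.pos_of_ne_zero fun hK => by
    subst hK
    rw [sigK_zero] at hX
    linarith
  have hXq : ∀ u, γ * sqnorm u ≤ sqnorm (X *ᵥ u) := fun u =>
    (mul_le_mul_of_nonneg_right hX (sqnorm_nonneg u)).trans (sq_sigK_mul_sqnorm_le X u)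
  have hPsym : ∀ l, (X * B l * Xᵀ)ᵀ = X * B l * Xᵀ := fun l => by
    rw [transpose_mul, transpose_mul, transpose_transpose, hBsym l, Matrix.mul_assoc]
  refine le_lamK hK _ (finrank_range_mulVecLin_of_mul_sqnorm_le hγ hXq) ?_
  rintro _ ⟨u, rfl⟩
  rw [mulVecLin_apply, dotProduct_sum_mul_self_mulVec hPsym, Finset.mul_sum, Finset.sum_mul]
  exact Finset.sum_le_sum fun l _ => by
    simpa only [mul_assoc] using mul_sqnorm_le_sqnorm_conj_mulVec hγ.le hXq
      (sq_mul_sqnorm_le_of_le_sigMin (hβ l).le (hB l)) u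

end SGRDPG
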